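/- arXiv:1609.07613 — 4 statements merged into one kernel-verified Lean document; each statement's English description precedes it below -/
import Mathlib

section
/- Let R be a commutative ring and M a finitely generated projective R-module. Let B : M →ₗ[R] M →ₗ[R] R be an R-bilinear form on M. If the induced linear map M → Hom_R(M, R) sending x to B(x, ·) is bijective, then the flipped map M → Hom_R(M, R) sending y to B(·, y) is also bijective. -/
/-- If `M` is a finitely generated projective module over a commutative ring `R` and
`B` is a bilinear form on `M` such that `x ↦ B x ·` is bijective onto `Hom_R(M, R)`,
then `y ↦ B · y` is also bijective. -/
theorem stmt0 (R : Type*) [CommRing R] (M : Type*) [AddCommGroup M] [Module R M]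
    [Module.Finite R M] [Module.Projective R M]
    (B : M →ₗ[R] M →ₗ[R] R) (h : Function.Bijective B) :
    Function.Bijective B.flip := by
  have key : B.flip = B.dualMap ∘ₗ Module.Dual.eval R M := by
    ext y x
    rfl
  rw [key]
  exact (LinearEquiv.ofBijective B h).dualMap.bijective.comp
    (Module.evalEquiv R M).bijective
end

section
/- Let R be a commutative ring and Λ an R-algebra which is finitely generated and projective as an R-module. Write Λ* = Hom_R(Λ, R), regarded as a right Λ-module via (f · b)(c) = f(bc) and as a left Λ-module via (a · f)(c) = f(ca). Then Λ* is isomorphic to Λ as right Λ-modules if and only if Λ* is isomorphic to Λ as left Λ-modules. -/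
section

variable (R : Type*) [CommRing R] (Λ : Type*) [Ring Λ] [Algebra R Λ]

/-- The right `Λ`-module structure on `Λ* = Hom_R(Λ, R)` given by `(f · b)(c) = f (b * c)`,
encoded as a module structure over the opposite ring `Λᵐᵒᵖ`. -/
noncomputable instance rightDualSMul : SMul Λᵐᵒᵖ (Λ →ₗ[R] R) :=
  ⟨fun b f => f.comp (LinearMap.mulLeft R b.unop)⟩

theorem rightDual_smul_apply (b : Λᵐᵒᵖ) (f : Λ →ₗ[R] R) (c : Λ) :
    (b • f) c = f (b.unop * c) := rfl

noncomputable instance rightDualModule : Module Λᵐᵒᵖ (Λ →ₗ[R] R) where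
  one_smul f := LinearMap.ext fun c => by simp [rightDual_smul_apply]
  mul_smul a b f := LinearMap.ext fun c => by
    simp [rightDual_smul_apply, mul_assoc]
  smul_zero a := LinearMap.ext fun c => rfl
  smul_add a f g := LinearMap.ext fun c => rfl
  add_smul a b f := LinearMap.ext fun c => by
    simp [rightDual_smul_apply, add_mul]
  zero_smul f := LinearMap.ext fun c => by
    simp [rightDual_smul_apply]

/-- The left `Λ`-module structure on `Λ* = Hom_R(Λ, R)` given by `(a · f)(c) = f (c * a)`. -/
noncomputable instance leftDualSMul : SMul Λ (Λ →ₗ[R] R) :=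
  ⟨fun a f => f.comp (LinearMap.mulRight R a)⟩

theorem leftDual_smul_apply (a : Λ) (f : Λ →ₗ[R] R) (c : Λ) :
    (a • f) c = f (c * a) := rfl

noncomputable instance leftDualModule : Module Λ (Λ →ₗ[R] R) where
  one_smul f := LinearMap.ext fun c => by simp [leftDual_smul_apply]
  mul_smul a b f := LinearMap.ext fun c => by
    simp [leftDual_smul_apply, mul_assoc]
  smul_zero a := LinearMap.ext fun c => rfl
  smul_add a f g := LinearMap.ext fun c => rfl
  add_smul a b f := LinearMap.ext fun c => by
    simp [leftDual_smul_apply, mul_add]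
  zero_smul f := LinearMap.ext fun c => by
    simp [leftDual_smul_apply]

variable {R Λ}

/-- `b ↦ (c ↦ f (b * c))`, as an `R`-linear map. -/
noncomputable def Lmap (f : Λ →ₗ[R] R) : Λ →ₗ[R] (Λ →ₗ[R] R) where
  toFun b := f.comp (LinearMap.mulLeft R b)
  map_add' a b := LinearMap.ext fun c => by simp [add_mul]
  map_smul' r b := LinearMap.ext fun c => by simp [smul_mul_assoc]

/-- `b ↦ (c ↦ f (c * b))`, as an `R`-linear map. -/
noncomputable def Rmap (f : Λ →ₗ[R] R) : Λ →ₗ[R] (Λ →ₗ[R] R) where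
  toFun b := f.comp (LinearMap.mulRight R b)
  map_add' a b := LinearMap.ext fun c => by simp [mul_add]
  map_smul' r b := LinearMap.ext fun c => by simp [mul_smul_comm]

@[simp] theorem Lmap_apply (f : Λ →ₗ[R] R) (b c : Λ) : Lmap f b c = f (b * c) := rfl
@[simp] theorem Rmap_apply (f : Λ →ₗ[R] R) (b c : Λ) : Rmap f b c = f (c * b) := rfl

theorem Rmap_eq (f : Λ →ₗ[R] R) :
    Rmap f = (Lmap f).dualMap.comp (Module.Dual.eval R Λ) := by
  ext b c; rfl

theorem Lmap_eq (f : Λ →ₗ[R] R) :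
    Lmap f = (Rmap f).dualMap.comp (Module.Dual.eval R Λ) := by
  ext b c; rfl

theorem bij_Rmap_of_Lmap [Module.Finite R Λ] [Module.Projective R Λ]
    (f : Λ →ₗ[R] R) (h : Function.Bijective (Lmap f)) :
    Function.Bijective (Rmap f) := by
  rw [Rmap_eq]
  exact ((LinearEquiv.ofBijective (Lmap f) h).dualMap.bijective).comp
    (Module.evalEquiv R Λ).bijective

theorem bij_Lmap_of_Rmap [Module.Finite R Λ] [Module.Projective R Λ]
    (f : Λ →ₗ[R] R) (h : Function.Bijective (Rmap f)) :
    Function.Bijective (Lmap f) := by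
  rw [Lmap_eq]
  exact ((LinearEquiv.ofBijective (Rmap f) h).dualMap.bijective).comp
    (Module.evalEquiv R Λ).bijective

variable (R Λ)

/-- For an `R`-algebra `Λ` which is finitely generated projective as an `R`-module,
the dual `Λ* = Hom_R(Λ, R)` is isomorphic to `Λ` as right `Λ`-modules (i.e. as
`Λᵐᵒᵖ`-modules, where `Λ` is a `Λᵐᵒᵖ`-module by right multiplication) if and only if
it is isomorphic to `Λ` as left `Λ`-modules. -/
theorem stmt1 [Module.Finite R Λ] [Module.Projective R Λ] :
    Nonempty ((Λ →ₗ[R] R) ≃ₗ[Λᵐᵒᵖ] Λ) ↔ Nonempty ((Λ →ₗ[R] R) ≃ₗ[Λ] Λ) := by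
  constructor
  · rintro ⟨e⟩
    set f : Λ →ₗ[R] R := e.symm 1 with hf
    have hsym : ∀ b : Λ, e.symm b = Lmap f b := by
      intro b
      have : e.symm b = MulOpposite.op b • f := by
        rw [hf, ← map_smul, op_smul_eq_mul, one_mul]
      rw [this]
      ext c
      rfl
    have hL : Function.Bijective (Lmap (R := R) (Λ := Λ) f) := by
      have := e.symm.bijective
      rwa [show ⇑e.symm = ⇑(Lmap f) from funext hsym] at this
    have hR := bij_Rmap_of_Lmap f hL
    let g : Λ →ₗ[Λ] (Λ →ₗ[R] R) :=
      { toFun := fun b => b • f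
        map_add' := fun a b => add_smul a b f
        map_smul' := fun a b => by
          simp only [smul_eq_mul, RingHom.id_apply, mul_smul] }
    have hg : Function.Bijective g := by
      have : ⇑g = ⇑(Rmap f) := by
        funext b; ext c; rfl
      rw [this]; exact hR
    exact ⟨(LinearEquiv.ofBijective g hg).symm⟩
  · rintro ⟨e⟩
    set f : Λ →ₗ[R] R := e.symm 1 with hf
    have hsym : ∀ b : Λ, e.symm b = Rmap f b := by
      intro b
      have : e.symm b = b • f := by
        rw [hf, ← map_smul, smul_eq_mul, mul_one]
      rw [this]
      ext c
      rfl
    have hR : Function.Bijective (Rmap (R := R) (Λ := Λ) f) := by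
      have := e.symm.bijective
      rwa [show ⇑e.symm = ⇑(Rmap f) from funext hsym] at this
    have hL := bij_Lmap_of_Rmap f hR
    let g : Λ →ₗ[Λᵐᵒᵖ] (Λ →ₗ[R] R) :=
      { toFun := fun b => MulOpposite.op b • f
        map_add' := fun a b => by
          simp only [MulOpposite.op_add, add_smul]
        map_smul' := fun a b => by
          simp only [RingHom.id_apply, MulOpposite.smul_eq_mul_unop, MulOpposite.op_mul,
            MulOpposite.op_unop, mul_smul] }
    have hg : Function.Bijective g := by
      have : ⇑g = ⇑(Lmap f) := by
        funext b; ext c; rfl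
      rw [this]; exact hL
    exact ⟨(LinearEquiv.ofBijective g hg).symm⟩

end
end

section
/- Let R be a commutative ring and G a finite group, and let A = MonoidAlgebra R G be the group algebra. Define λ : A →ₗ[R] R by λ(x) = x(1), the coefficient of x at the identity element of G. Then λ(x * y) = λ(y * x) for all x, y ∈ A, and the map A → Hom_R(A, R) sending x to the functional y ↦ λ(x * y) is bijective. In particular, the group algebra of a finite group is a symmetric algebra relative to R. -/
/-!
Writing `λ x = x(1)`, one has `λ (x * y) = ∑_g x(g) y(g⁻¹)`, which is symmetric in `x` and `y`.
Testing `λ (x * ·)` on the basis vector `g⁻¹` recovers the coefficient `x(g)`, so `x` is determined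
by its functional; conversely, when `G` is finite every functional `f` arises from
`x = ∑_g f(g⁻¹) g`.
-/

namespace MonoidAlgebra

variable {R G : Type*}

theorem coeff_one_mul_comm [CommSemiring R] [Group G] (x y : MonoidAlgebra R G) :
    (x * y).coeff 1 = (y * x).coeff 1 := by
  rw [coeff_mul_apply_left, coeff_mul_apply_right]
  simp only [mul_one, one_mul, mul_comm]

theorem coeff_one_mul_single_inv [Semiring R] [Group G] (x : MonoidAlgebra R G) (g : G) :
    (x * single g⁻¹ 1).coeff 1 = x.coeff g := by
  simp

section CommSemiring

variable [CommSemiring R] [Group G]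

variable (R) in
noncomputable def traceDual (x : MonoidAlgebra R G) : MonoidAlgebra R G →ₗ[R] R :=
  (Finsupp.lapply 1).comp ((coeffLinearEquiv R).toLinearMap.comp (LinearMap.mulLeft R x))

theorem traceDual_apply (x y : MonoidAlgebra R G) : traceDual R x y = (x * y).coeff 1 := rfl

theorem traceDual_injective : Function.Injective (traceDual R (G := G)) := fun x y hxy ↦
  coeff_injective <| Finsupp.ext fun g ↦ by
    rw [← coeff_one_mul_single_inv x, ← coeff_one_mul_single_inv y, ← traceDual_apply,
      ← traceDual_apply, hxy]

theorem traceDual_surjective [Finite G] : Function.Surjective (traceDual R (G := G)) := by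
  intro f
  refine ⟨ofCoeff (Finsupp.equivFunOnFinite.symm fun g ↦ f (single g⁻¹ 1)), ?_⟩
  refine (basis G R).ext fun g ↦ ?_
  rw [basis_apply, traceDual_apply, ← inv_inv g, coeff_one_mul_single_inv]
  simp

end CommSemiring

end MonoidAlgebra

/-- For a finite group `G` and a commutative ring `R`, the group algebra
`A = MonoidAlgebra R G` is a symmetric algebra relative to `R`: the functional
`λ : A →ₗ[R] R`, `λ x = x 1` (the coefficient at the identity of `G`), satisfies
`λ (x * y) = λ (y * x)`, and `x ↦ (y ↦ λ (x * y))` is a bijection from `A` onto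
`Hom_R(A, R)`. -/
theorem stmt9 (R : Type*) [CommRing R] (G : Type*) [Group G] [Finite G] :
    (∀ x y : MonoidAlgebra R G, (x * y).coeff 1 = (y * x).coeff 1) ∧
    Function.Bijective (fun x : MonoidAlgebra R G =>
      ((Finsupp.lapply (1 : G)).comp ((MonoidAlgebra.coeffLinearEquiv R).toLinearMap.comp (LinearMap.mulLeft R x)) :
        MonoidAlgebra R G →ₗ[R] R)) :=
  ⟨MonoidAlgebra.coeff_one_mul_comm, MonoidAlgebra.traceDual_injective,
    MonoidAlgebra.traceDual_surjective⟩
end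

section
/- Let R be a commutative ring, Λ an R-algebra, and G a finite group. Suppose there exists an R-linear functional λ : Λ →ₗ[R] R such that the map Λ → Hom_R(Λ, R), a ↦ (b ↦ λ(a b)), is bijective. Define ψ : MonoidAlgebra Λ G →ₗ[R] R by ψ(x) = λ(x(1)), where x(1) is the coefficient of x at the identity element of G. Then the map MonoidAlgebra Λ G → Hom_R(MonoidAlgebra Λ G, R) sending u to the functional v ↦ ψ(u * v) is bijective. In other words, if Λ is a Frobenius algebra relative to R, then so is the group algebra Λ[G] = MonoidAlgebra Λ G. -/
/-!
Since `ψ (u * single g b) = l (u (g⁻¹) * b)`, restricting `ψ (u * ·)` to the copies `single g Λ`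
of `Λ` turns `u ↦ ψ (u * ·)` into `u ↦ (g ↦ l (u (g⁻¹) * ·))`. A functional on `Λ[G]` is the same
as a `G`-indexed family of functionals on `Λ`, and for finite `G` an element of `Λ[G]` is the same
as a function `G → Λ`; up to these bijections the map is a product of copies of `a ↦ l (a * ·)`.
-/

namespace MonoidAlgebra

variable {R S M N : Type*} [Semiring R] [Semiring S] [Module R S] [AddCommMonoid N] [Module R N]

theorem bijective_comp_lsingle :
    Function.Bijective (fun (f : MonoidAlgebra S M →ₗ[R] N) (m : M) => f ∘ₗ lsingle m) := by
  refine ⟨fun f g hfg => lhom_ext' (congrFun hfg), fun φ => ?_⟩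
  refine ⟨Finsupp.lsum ℕ φ ∘ₗ (coeffLinearEquiv R).toLinearMap, funext fun m => ?_⟩
  ext b
  simp [lsingle]

theorem bijective_coeff_comp_inv {G : Type*} [Group G] [Finite G] :
    Function.Bijective (fun (x : MonoidAlgebra S G) (g : G) => x.coeff g⁻¹) :=
  have hinv : Function.Involutive (fun (c : G → S) (g : G) => c g⁻¹) := fun c => by simp
  hinv.bijective.comp (coeffEquiv.trans Finsupp.equivFunOnFinite).bijective

end MonoidAlgebra

/-- If `Λ` is a Frobenius algebra relative to `R`, witnessed by an `R`-linear functional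
`l : Λ →ₗ[R] R` for which `a ↦ (b ↦ l (a * b))` is a bijection `Λ → Hom_R(Λ, R)`, and
`G` is a finite group, then the group algebra `MonoidAlgebra Λ G` is again a Frobenius
algebra relative to `R`, witnessed by `ψ : MonoidAlgebra Λ G →ₗ[R] R`, `ψ x = l (x 1)`
(with `x 1` the coefficient at the identity of `G`). -/
theorem stmt11 (R : Type*) [CommRing R] (Λ : Type*) [Ring Λ] [Algebra R Λ]
    (G : Type*) [Group G] [Finite G]
    (l : Λ →ₗ[R] R)
    (hbij : Function.Bijective (fun a : Λ =>
      (l.comp (LinearMap.mulLeft R a) : Λ →ₗ[R] R))) :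
    Function.Bijective (fun u : MonoidAlgebra Λ G =>
      (((l.comp (Finsupp.lapply (1 : G))).comp (MonoidAlgebra.coeffLinearEquiv R).toLinearMap).comp (LinearMap.mulLeft R u) :
        MonoidAlgebra Λ G →ₗ[R] R)) := by
  rw [← MonoidAlgebra.bijective_comp_lsingle.of_comp_iff']
  convert (Function.Bijective.piMap fun _ : G => hbij).comp
    (MonoidAlgebra.bijective_coeff_comp_inv (S := Λ) (G := G)) using 1
  ext u g b
  show l ((u * MonoidAlgebra.single g b).coeff 1) = l (u.coeff g⁻¹ * b)
  rw [MonoidAlgebra.coeff_mul_single_apply, one_mul]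
end
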